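/- If z is an irreducible 1-cocycle (its only self-intertwiners are scalar multiples of the identity), then the unitary representation of the fundamental group π₁(K, o) defined by z is a factor representation: the centre of the von Neumann algebra R^z(o) generated by {z(ℓ) : ℓ loop at o} consists only of scalars. -/

import Mathlib

/-- A 1-simplex of a poset `K`: two faces and a support dominating both. -/
structure OneSimplex (K : Type*) [PartialOrder K] where
  face0 : K
  face1 : K
  supp : K
  le0 : face0 ≤ supp
  le1 : face1 ≤ supp

/-- The reverse of a 1-simplex: same support, exchanged faces. -/
def OneSimplex.rev {K : Type*} [PartialOrder K] (b : OneSimplex K) : OneSimplex K :=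
  ⟨b.face1, b.face0, b.supp, b.le1, b.le0⟩

/-- The degenerate 1-simplex `σ₀ a` at a 0-simplex `a`. -/
def OneSimplex.degenerate {K : Type*} [PartialOrder K] (a : K) : OneSimplex K :=
  ⟨a, a, a, le_refl a, le_refl a⟩

/-- A 2-simplex of a poset `K`, presented by its three vertices, the supports of its
three faces, and its own support, with all required order relations. Its faces
`∂₀c, ∂₁c, ∂₂c` satisfy the simplicial identities by construction. -/
structure TwoSimplex (K : Type*) [PartialOrder K] where
  vstart : K
  vmid : K
  vend : K
  s0 : K
  s1 : K
  s2 : K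
  supp : K
  hs0 : s0 ≤ supp
  hs1 : s1 ≤ supp
  hs2 : s2 ≤ supp
  h0s : vmid ≤ s0
  h0e : vend ≤ s0
  h1s : vstart ≤ s1
  h1e : vend ≤ s1
  h2s : vstart ≤ s2
  h2e : vmid ≤ s2

/-- The face `∂₀c` (from `vmid` to `vend`). -/
def TwoSimplex.face0 {K : Type*} [PartialOrder K] (c : TwoSimplex K) : OneSimplex K :=
  ⟨c.vend, c.vmid, c.s0, c.h0e, c.h0s⟩

/-- The face `∂₁c` (from `vstart` to `vend`). -/
def TwoSimplex.face1 {K : Type*} [PartialOrder K] (c : TwoSimplex K) : OneSimplex K :=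
  ⟨c.vend, c.vstart, c.s1, c.h1e, c.h1s⟩

/-- The face `∂₂c` (from `vstart` to `vmid`). -/
def TwoSimplex.face2 {K : Type*} [PartialOrder K] (c : TwoSimplex K) : OneSimplex K :=
  ⟨c.vmid, c.vstart, c.s2, c.h2e, c.h2s⟩

/-- A path in the poset `K` from `x` to `y`: a nonempty composable string of
1-simplices, `∂₁` of the first being `x` and `∂₀` of the last being `y`. -/
inductive PPath (K : Type*) [PartialOrder K] : K → K → Type _
  | single (b : OneSimplex K) : PPath K b.face1 b.face0
  | cons (b : OneSimplex K) {x : K} (p : PPath K x b.face1) : PPath K x b.face0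

/-- Composition of paths: `q.comp p` first traverses `p`, then `q`. -/
def PPath.comp {K : Type*} [PartialOrder K] : ∀ {x y w : K}, PPath K y w → PPath K x y → PPath K x w
  | _, _, _, .single b, p => .cons b p
  | _, _, _, .cons b q, p => .cons b (q.comp p)

/-- The reverse of a path. -/
def PPath.rev {K : Type*} [PartialOrder K] : ∀ {x y : K}, PPath K x y → PPath K y x
  | _, _, .single b => .single b.rev
  | _, _, .cons b p => PPath.comp p.rev (.single b.rev)

/-- Multiplicative extension of a function on 1-simplices to paths:
`z(bₙ * ⋯ * b₁) = z(bₙ) ⋯ z(b₁)`. -/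
def PPath.eval {K : Type*} [PartialOrder K] {M : Type*} [Monoid M]
    (z : OneSimplex K → M) : ∀ {x y : K}, PPath K x y → M
  | _, _, .single b => z b
  | _, _, .cons b p => z b * p.eval z

/-- The support of the path is causally disjoint from `o` (every 1-simplex of the path
has support `⊥ o`). -/
def PPath.suppDisjoint {K : Type*} [PartialOrder K] (perp : K → K → Prop) (o : K) :
    ∀ {x y : K}, PPath K x y → Prop
  | _, _, .single b => perp b.supp o
  | _, _, .cons b p => perp b.supp o ∧ p.suppDisjoint perp o

/-- Homotopy of paths with the same endpoints: the equivalence relation generated by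
elementary deformations (replacing `∂₁c` by `∂₀c * ∂₂c` for a 2-simplex `c`), compatible
with composition. -/
inductive PHomotopic {K : Type*} [PartialOrder K] : ∀ {x y : K}, PPath K x y → PPath K x y → Prop
  | refl {x y : K} (p : PPath K x y) : PHomotopic p p
  | symm {x y : K} {p q : PPath K x y} : PHomotopic p q → PHomotopic q p
  | trans {x y : K} {p q r : PPath K x y} : PHomotopic p q → PHomotopic q r → PHomotopic p r
  | deform (c : TwoSimplex K) :
      PHomotopic (.single c.face1) ((PPath.single c.face0).comp (.single c.face2))
  | comp_congr {x y w : K} {q q' : PPath K y w} {p p' : PPath K x y} :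
      PHomotopic q q' → PHomotopic p p' → PHomotopic (q.comp p) (q'.comp p')

/-- The von Neumann algebra (double commutant) generated by the values of a 1-cocycle on
loops based at `o`. -/
def loopVN {K : Type*} [PartialOrder K]
    {H : Type*} [NormedAddCommGroup H] [InnerProductSpace ℂ H] [CompleteSpace H]
    (o : K) (z : OneSimplex K → (H →L[ℂ] H)) : Set (H →L[ℂ] H) :=
  Set.centralizer (Set.centralizer {T : H →L[ℂ] H | ∃ ℓ : PPath K o o, ℓ.eval z = T})

/-!
Fix paths `p a` from `o` to every `a` and conjugate a central `X` of the loop algebra at `o`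
along them: `t a = z(p a) X z(p a)*`. The family `t` intertwines `z` with itself, because
`z(p ∂₀b)* z(b) z(p ∂₁b)` is the value of `z` on a loop at `o`, with which `X` commutes.
It is local, `t a ∈ R a`, by Haag duality: every `Y ∈ R b` with `b ⊥ a` commutes with `z` on
loops at `a` (deform them away from `b`), hence `z(p a)* Y z(p a)` commutes with the loops at
`o` and so with `X`. Irreducibility makes `t` scalar, and `t o = X`.
-/

namespace PPath

variable {K : Type*} [PartialOrder K] {M : Type*} [Monoid M]

theorem eval_comp (z : OneSimplex K → M) :
    ∀ {x y w : K} (q : PPath K y w) (p : PPath K x y),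
      (q.comp p).eval z = q.eval z * p.eval z
  | _, _, _, .single _, _ => rfl
  | _, _, _, .cons b q, p => by
      simp only [comp, eval, eval_comp z q p, mul_assoc]

theorem commute_eval_of_suppDisjoint {perp : K → K → Prop} {o : K} {z : OneSimplex K → M}
    {Y : M} (hY : ∀ b : OneSimplex K, perp b.supp o → Commute Y (z b)) :
    ∀ {x y : K} (q : PPath K x y), q.suppDisjoint perp o → Commute Y (q.eval z)
  | _, _, .single b, hq => hY b hq
  | _, _, .cons b q, hq => (hY b hq.1).mul_right (commute_eval_of_suppDisjoint hY q hq.2)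

end PPath

theorem PHomotopic.eval_eq {K : Type*} [PartialOrder K] {M : Type*} [Monoid M]
    {z : OneSimplex K → M} (hzc : ∀ c : TwoSimplex K, z c.face0 * z c.face2 = z c.face1)
    {x y : K} {p q : PPath K x y} (h : PHomotopic p q) : p.eval z = q.eval z := by
  induction h with
  | refl => rfl
  | symm _ ih => exact ih.symm
  | trans _ _ ih₁ ih₂ => exact ih₁.trans ih₂
  | deform c => exact (hzc c).symm
  | comp_congr _ _ ih₁ ih₂ => simp only [PPath.eval_comp, ih₁, ih₂]

section StarMonoid

variable {M : Type*} [Monoid M] [StarMul M] {u : M}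

theorem Commute.conj_of_mem_unitary {x y : M} (h : Commute x y) (hu : u ∈ unitary M) :
    Commute (u * x * star u) (u * y * star u) := by
  have hcancel : star u * u = 1 := Unitary.star_mul_self_of_mem hu
  calc u * x * star u * (u * y * star u) = u * (x * y) * star u := by
        simp only [mul_assoc, ← mul_assoc (star u) u, hcancel, one_mul]
    _ = u * (y * x) * star u := by rw [h.eq]
    _ = u * y * star u * (u * x * star u) := by
        simp only [mul_assoc, ← mul_assoc (star u) u, hcancel, one_mul]

theorem conj_star_conj_of_mem_unitary (hu : u ∈ unitary M) (x : M) :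
    u * (star u * x * u) * star u = x := by
  simp only [← mul_assoc, Unitary.mul_star_self_of_mem hu, one_mul]
  simp only [mul_assoc, Unitary.mul_star_self_of_mem hu, mul_one]

theorem star_conj_conj_of_mem_unitary (hu : u ∈ unitary M) (x : M) :
    star u * (u * x * star u) * u = x := by
  simpa only [star_star] using conj_star_conj_of_mem_unitary (Unitary.star_mem hu) x

theorem commute_conj_of_mem_centralizer_centralizer {S : Set M} {X Y : M}
    (hX : X ∈ S.centralizer.centralizer) (hu : u ∈ unitary M)
    (hY : ∀ s ∈ S, Commute Y (u * s * star u)) : Commute Y (u * X * star u) := by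
  have hconj : star u * Y * u ∈ S.centralizer := fun s hs => by
    have := (hY s hs).conj_of_mem_unitary (Unitary.star_mem hu)
    rw [star_star, star_conj_conj_of_mem_unitary hu] at this
    exact this.symm.eq
  simpa only [conj_star_conj_of_mem_unitary hu] using
    (show Commute (star u * Y * u) X from hX _ hconj).conj_of_mem_unitary hu

theorem conj_mul_eq_mul_conj_of_commute {X w v : M} (hu : u ∈ unitary M)
    (hv : v ∈ unitary M) (h : Commute X (star u * w * v)) :
    u * X * star u * w = w * (v * X * star v) :=
  calc u * X * star u * w = u * (X * (star u * w * v)) * star v := by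
        simp only [mul_assoc, Unitary.mul_star_self_of_mem hv, mul_one]
    _ = u * (star u * w * v * X) * star v := by rw [h.eq]
    _ = w * (v * X * star v) := by
        simp only [← mul_assoc, Unitary.mul_star_self_of_mem hu, one_mul]

theorem conj_eq_of_commute {X : M} (hu : u ∈ unitary M) (h : Commute X u) :
    u * X * star u = X := by
  rw [← h.eq, mul_assoc, Unitary.mul_star_self_of_mem hu, mul_one]

end StarMonoid

section Cocycle

variable {K : Type*} [PartialOrder K] {M : Type*} [Monoid M] [StarMul M]
  {z : OneSimplex K → M}

theorem cocycle_degenerate_eq_one (hzu : ∀ b, z b ∈ unitary M)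
    (hzc : ∀ c : TwoSimplex K, z c.face0 * z c.face2 = z c.face1) (a : K) :
    z (OneSimplex.degenerate a) = 1 := by
  set d := z (OneSimplex.degenerate a)
  have hidem : d * d = d := hzc ⟨a, a, a, a, a, a, a, le_rfl, le_rfl, le_rfl, le_rfl,
    le_rfl, le_rfl, le_rfl, le_rfl, le_rfl⟩
  calc d = star d * (d * d) := by rw [← mul_assoc, Unitary.star_mul_self_of_mem (hzu _), one_mul]
    _ = 1 := by rw [hidem, Unitary.star_mul_self_of_mem (hzu _)]

theorem cocycle_rev_eq_star (hzu : ∀ b, z b ∈ unitary M)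
    (hzc : ∀ c : TwoSimplex K, z c.face0 * z c.face2 = z c.face1) (b : OneSimplex K) :
    z b.rev = star (z b) := by
  -- the 2-simplex with vertices `∂₁b, ∂₀b, ∂₁b` has faces `b.rev`, `σ₀ ∂₁b`, `b`
  have hrev : z b.rev * z b = 1 := by
    rw [← cocycle_degenerate_eq_one hzu hzc b.face1]
    exact hzc ⟨b.face1, b.face0, b.face1, b.supp, b.face1, b.supp, b.supp,
      le_rfl, b.le1, le_rfl, b.le0, b.le1, le_rfl, le_rfl, b.le1, b.le0⟩
  calc z b.rev = z b.rev * (z b * star (z b)) := by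
        rw [Unitary.mul_star_self_of_mem (hzu b), mul_one]
    _ = star (z b) := by rw [← mul_assoc, hrev, one_mul]

theorem PPath.eval_mem_unitary (hzu : ∀ b, z b ∈ unitary M) :
    ∀ {x y : K} (p : PPath K x y), p.eval z ∈ unitary M
  | _, _, .single b => hzu b
  | _, _, .cons b p => Submonoid.mul_mem _ (hzu b) (eval_mem_unitary hzu p)

theorem PPath.eval_rev (hzu : ∀ b, z b ∈ unitary M)
    (hzc : ∀ c : TwoSimplex K, z c.face0 * z c.face2 = z c.face1) :
    ∀ {x y : K} (p : PPath K x y), p.rev.eval z = star (p.eval z)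
  | _, _, .single b => cocycle_rev_eq_star hzu hzc b
  | _, _, .cons b p => (eval_comp z p.rev (.single b.rev)).trans <| by
      change p.rev.eval z * z b.rev = star (z b * p.eval z)
      rw [eval_rev hzu hzc p, cocycle_rev_eq_star hzu hzc, star_mul]

theorem PPath.eval_comp_comp_rev (hzu : ∀ b, z b ∈ unitary M)
    (hzc : ∀ c : TwoSimplex K, z c.face0 * z c.face2 = z c.face1)
    {x y : K} (p : PPath K x y) (ℓ : PPath K x x) :
    (p.comp (ℓ.comp p.rev)).eval z = p.eval z * ℓ.eval z * star (p.eval z) := by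
  rw [eval_comp, eval_comp, eval_rev hzu hzc, mul_assoc]

theorem conj_eval_intertwines (hzu : ∀ b, z b ∈ unitary M)
    (hzc : ∀ c : TwoSimplex K, z c.face0 * z c.face2 = z c.face1)
    {o : K} {X : M} (hX : ∀ ℓ : PPath K o o, Commute X (ℓ.eval z)) (b : OneSimplex K)
    (p : PPath K o b.face0) (q : PPath K o b.face1) :
    p.eval z * X * star (p.eval z) * z b = z b * (q.eval z * X * star (q.eval z)) := by
  refine conj_mul_eq_mul_conj_of_commute (p.eval_mem_unitary hzu) (q.eval_mem_unitary hzu) ?_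
  have := hX (p.rev.comp ((PPath.single b).comp q))
  rwa [PPath.eval_comp, PPath.eval_comp, PPath.eval_rev hzu hzc, ← mul_assoc] at this

end Cocycle

section Net

variable {K : Type*} {H : Type*} [NormedAddCommGroup H] [InnerProductSpace ℂ H]
  [CompleteSpace H] {perp : K → K → Prop} {R : K → VonNeumannAlgebra H}

theorem commute_of_perp
    (hcaus : ∀ a : K, (R a : Set (H →L[ℂ] H)) ⊆
      ⋂ (b : K), ⋂ (_ : perp b a), ((R b).commutant : Set (H →L[ℂ] H)))
    {a b : K} (hab : perp a b) {X Y : H →L[ℂ] H} (hX : X ∈ R a) (hY : Y ∈ R b) :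
    Commute X Y :=
  VonNeumannAlgebra.mem_commutant_iff.mp
    (Set.mem_iInter₂.mp (hcaus b hY) a hab) X hX

theorem mem_of_forall_perp_commute
    (hdual : ∀ a : K, ⋂ (b : K), ⋂ (_ : perp b a), ((R b).commutant : Set (H →L[ℂ] H)) ⊆
      (R a : Set (H →L[ℂ] H)))
    {a : K} {T : H →L[ℂ] H} (hT : ∀ b, perp b a → ∀ Y ∈ R b, Commute Y T) : T ∈ R a :=
  hdual a <| Set.mem_iInter₂.mpr fun b hba =>
    VonNeumannAlgebra.mem_commutant_iff.mpr fun Y hY => hT b hba Y hY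

end Net

section LoopNet

variable {K : Type*} [PartialOrder K]
  {H : Type*} [NormedAddCommGroup H] [InnerProductSpace ℂ H] [CompleteSpace H]
  {perp : K → K → Prop} {R : K → VonNeumannAlgebra H}

theorem commute_eval_loop_of_perp (hsymm : ∀ x y : K, perp x y → perp y x)
    (hcaus : ∀ a : K, (R a : Set (H →L[ℂ] H)) ⊆
      ⋂ (b : K), ⋂ (_ : perp b a), ((R b).commutant : Set (H →L[ℂ] H)))
    (hdef : ∀ (a o : K), perp a o → ∀ ℓ : PPath K a a,
        ∃ ℓ' : PPath K a a, PHomotopic ℓ ℓ' ∧ ℓ'.suppDisjoint perp o)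
    {z : OneSimplex K → (H →L[ℂ] H)}
    (hzc : ∀ c : TwoSimplex K, z c.face0 * z c.face2 = z c.face1)
    (hloc : ∀ b : OneSimplex K, z b ∈ R b.supp)
    {a b : K} (hba : perp b a) {Y : H →L[ℂ] H} (hY : Y ∈ R b) (ℓ : PPath K a a) :
    Commute Y (ℓ.eval z) := by
  obtain ⟨ℓ', hℓ, hdisj⟩ := hdef a b (hsymm b a hba) ℓ
  rw [hℓ.eval_eq hzc]
  exact PPath.commute_eval_of_suppDisjoint
    (fun s hs => (commute_of_perp hcaus hs (hloc s) hY).symm) ℓ' hdisj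

theorem conj_eval_mem (hsymm : ∀ x y : K, perp x y → perp y x)
    (hhaag : ∀ a : K, (R a : Set (H →L[ℂ] H)) =
        ⋂ (b : K), ⋂ (_ : perp b a), ((R b).commutant : Set (H →L[ℂ] H)))
    (hdef : ∀ (a o : K), perp a o → ∀ ℓ : PPath K a a,
        ∃ ℓ' : PPath K a a, PHomotopic ℓ ℓ' ∧ ℓ'.suppDisjoint perp o)
    {z : OneSimplex K → (H →L[ℂ] H)} (hzu : ∀ b : OneSimplex K, z b ∈ unitary (H →L[ℂ] H))
    (hzc : ∀ c : TwoSimplex K, z c.face0 * z c.face2 = z c.face1)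
    (hloc : ∀ b : OneSimplex K, z b ∈ R b.supp)
    {o a : K} {X : H →L[ℂ] H} (hX : X ∈ loopVN o z) (p : PPath K o a) :
    p.eval z * X * star (p.eval z) ∈ R a := by
  refine mem_of_forall_perp_commute (fun a => (hhaag a).ge) fun b hba Y hY =>
    commute_conj_of_mem_centralizer_centralizer hX (p.eval_mem_unitary hzu) ?_
  rintro _ ⟨ℓ, rfl⟩
  rw [← p.eval_comp_comp_rev hzu hzc]
  exact commute_eval_loop_of_perp hsymm (fun a => (hhaag a).le) hdef hzc hloc hba hY _

end LoopNet

theorem irreducible_cocycle_factor_representation_general {K : Type*} [PartialOrder K]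
    {H : Type*} [NormedAddCommGroup H] [InnerProductSpace ℂ H] [CompleteSpace H]
    (hconn : ∀ x y : K, Nonempty (PPath K x y))
    (perp : K → K → Prop)
    (hsymm : ∀ x y : K, perp x y → perp y x)
    (R : K → VonNeumannAlgebra H)
    (hhaag : ∀ a : K, (R a : Set (H →L[ℂ] H)) =
        ⋂ (b : K), ⋂ (_ : perp b a), ((R b).commutant : Set (H →L[ℂ] H)))
    (hdef : ∀ (a o : K), perp a o → ∀ ℓ : PPath K a a,
        ∃ ℓ' : PPath K a a, PHomotopic ℓ ℓ' ∧ ℓ'.suppDisjoint perp o)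
    (o : K)
    (z : OneSimplex K → (H →L[ℂ] H))
    (hzu : ∀ b : OneSimplex K, z b ∈ unitary (H →L[ℂ] H))
    (hzc : ∀ c : TwoSimplex K, z c.face0 * z c.face2 = z c.face1)
    (hloc : ∀ b : OneSimplex K, z b ∈ R b.supp)
    (hirr : ∀ t : K → (H →L[ℂ] H), (∀ a : K, t a ∈ R a) →
      (∀ b : OneSimplex K, t b.face0 * z b = z b * t b.face1) →
      ∃ c : ℂ, ∀ a : K, t a = c • (1 : H →L[ℂ] H)) :
    ∀ X ∈ loopVN o z, (∀ Y ∈ loopVN o z, Commute X Y) →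
      ∃ c : ℂ, X = c • (1 : H →L[ℂ] H) := by
  intro X hX hcentral
  have hXloop : ∀ ℓ : PPath K o o, Commute X (ℓ.eval z) := fun ℓ =>
    hcentral _ (Set.subset_centralizer_centralizer ⟨ℓ, rfl⟩)
  let p (a : K) : PPath K o a := (hconn o a).some
  let t (a : K) : H →L[ℂ] H := (p a).eval z * X * star ((p a).eval z)
  obtain ⟨c, hc⟩ := hirr t
    (fun a => conj_eval_mem hsymm hhaag hdef hzu hzc hloc hX (p a))
    (fun b => conj_eval_intertwines hzu hzc hXloop b (p b.face0) (p b.face1))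
  have hto : t o = X := conj_eq_of_commute ((p o).eval_mem_unitary hzu) (hXloop (p o))
  exact ⟨c, hto.symm.trans (hc o)⟩

theorem irreducible_cocycle_factor_representation {K : Type*} [PartialOrder K]
    {H : Type*} [NormedAddCommGroup H] [InnerProductSpace ℂ H] [CompleteSpace H]
    (hconn : ∀ x y : K, Nonempty (PPath K x y))
    (perp : K → K → Prop)
    (hsymm : ∀ x y : K, perp x y → perp y x)
    (R : K → VonNeumannAlgebra H)
    (hiso : ∀ ⦃a b : K⦄, a ≤ b → (R a : Set (H →L[ℂ] H)) ⊆ (R b : Set (H →L[ℂ] H)))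
    (hhaag : ∀ a : K, (R a : Set (H →L[ℂ] H)) =
        ⋂ (b : K), ⋂ (_ : perp b a), ((R b).commutant : Set (H →L[ℂ] H)))
    (hccconn : ∀ (o x y : K), perp x o → perp y o →
        ∃ q : PPath K x y, q.suppDisjoint perp o)
    (hdef : ∀ (a o : K), perp a o → ∀ ℓ : PPath K a a,
        ∃ ℓ' : PPath K a a, PHomotopic ℓ ℓ' ∧ ℓ'.suppDisjoint perp o)
    (o : K)
    (z : OneSimplex K → (H →L[ℂ] H))
    (hzu : ∀ b : OneSimplex K, z b ∈ unitary (H →L[ℂ] H))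
    (hzc : ∀ c : TwoSimplex K, z c.face0 * z c.face2 = z c.face1)
    (hloc : ∀ b : OneSimplex K, z b ∈ R b.supp)
    (hirr : ∀ t : K → (H →L[ℂ] H), (∀ a : K, t a ∈ R a) →
      (∀ b : OneSimplex K, t b.face0 * z b = z b * t b.face1) →
      ∃ c : ℂ, ∀ a : K, t a = c • (1 : H →L[ℂ] H)) :
    ∀ X ∈ loopVN o z, (∀ Y ∈ loopVN o z, Commute X Y) →
      ∃ c : ℂ, X = c • (1 : H →L[ℂ] H) :=
  irreducible_cocycle_factor_representation_general hconn perp hsymm R hhaag hdef o z hzu hzc hloc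
    hirr
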